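/- arXiv:2410.08144 — 4 statements merged into one kernel-verified Lean document; each statement's English description precedes it below -/
import Mathlib

section
/- Let γ ∈ ℝ and η > 0. If z, w ∈ ℂ satisfy η·|z| ≥ 1 and η·|w| ≥ 1, then | |z|^γ − |w|^γ | ≤ |γ|·( η^{|γ−1|} + |z|^{|γ−1|} + |w|^{|γ−1|} )·|z − w|. -/
open Real

lemma aux_bound {γ η a b : ℝ} (hη : 0 < η) (ha : 1/η ≤ a) (hb : 1/η ≤ b) (hba : b ≤ a) :
    |a ^ γ - b ^ γ| ≤ |γ| * (η ^ |γ - 1| + a ^ |γ - 1| + b ^ |γ - 1|) * |a - b| := by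
  have hη' : 0 < 1/η := by positivity
  have hb0 : 0 < b := lt_of_lt_of_le hη' hb
  have ha0 : 0 < a := lt_of_lt_of_le hb0 hba
  rcases eq_or_lt_of_le hba with h | h
  · subst h; simp
  · obtain ⟨c, hc, hc'⟩ := exists_hasDerivAt_eq_slope (fun x => x ^ γ)
      (fun x => γ * x ^ (γ - 1)) h
      (by
        apply ContinuousOn.rpow_const continuousOn_id
        intro x hx; left
        exact ne_of_gt (lt_of_lt_of_le hb0 hx.1))
      (fun x hx => Real.hasDerivAt_rpow_const (Or.inl (ne_of_gt (lt_of_lt_of_le hb0 (le_of_lt hx.1)))))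
    have hc0 : 0 < c := lt_trans hb0 hc.1
    have key : a ^ γ - b ^ γ = γ * c ^ (γ - 1) * (a - b) := by
      rw [hc', div_mul_cancel₀ _ (by linarith : a - b ≠ 0)]
    rw [key, abs_mul, abs_mul]
    gcongr
    rw [abs_of_pos (Real.rpow_pos_of_pos hc0 _)]
    rcases le_or_gt 1 γ with hγ | hγ
    · have : |γ - 1| = γ - 1 := abs_of_nonneg (by linarith)
      rw [this]
      have : c ^ (γ - 1) ≤ a ^ (γ - 1) :=
        Real.rpow_le_rpow (le_of_lt hc0) (le_of_lt hc.2) (by linarith)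
      have h1 : (0:ℝ) ≤ η ^ (γ - 1) := le_of_lt (Real.rpow_pos_of_pos hη _)
      have h2 : (0:ℝ) ≤ b ^ (γ - 1) := le_of_lt (Real.rpow_pos_of_pos hb0 _)
      linarith
    · have habs : |γ - 1| = 1 - γ := by rw [abs_of_neg (by linarith : γ - 1 < 0)]; ring
      rw [habs]
      have hcb : 1/η ≤ c := le_trans hb (le_of_lt hc.1)
      have : c ^ (γ - 1) ≤ (1/η) ^ (γ - 1) :=
        Real.rpow_le_rpow_of_nonpos hη' hcb (by linarith)
      have heq : (1/η : ℝ) ^ (γ - 1) = η ^ (1 - γ) := by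
        rw [one_div, ← Real.rpow_neg_one, ← Real.rpow_mul (le_of_lt hη)]
        ring_nf
      have h1 : (0:ℝ) ≤ a ^ (1 - γ) := le_of_lt (Real.rpow_pos_of_pos ha0 _)
      have h2 : (0:ℝ) ≤ b ^ (1 - γ) := le_of_lt (Real.rpow_pos_of_pos hb0 _)
      rw [heq] at this
      linarith

/-- Mean-value inequality for real powers of moduli under the non-vanishing condition. -/
theorem stmt_1 (γ η : ℝ) (hη : 0 < η) (z w : ℂ)
    (hz : 1 ≤ η * ‖z‖) (hw : 1 ≤ η * ‖w‖) :
    |‖z‖ ^ γ - ‖w‖ ^ γ| ≤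
      |γ| * (η ^ |γ - 1| + ‖z‖ ^ |γ - 1| + ‖w‖ ^ |γ - 1|) * ‖z - w‖ := by
  have hz' : 1/η ≤ ‖z‖ := (div_le_iff₀' hη).mpr hz
  have hw' : 1/η ≤ ‖w‖ := (div_le_iff₀' hη).mpr hw
  have hdist : |‖z‖ - ‖w‖| ≤ ‖z - w‖ := abs_norm_sub_norm_le z w
  have hnn : 0 ≤ |γ| * (η ^ |γ - 1| + ‖z‖ ^ |γ - 1| + ‖w‖ ^ |γ - 1|) := by
    have h0 : (0:ℝ) < η ^ |γ - 1| := Real.rpow_pos_of_pos hη _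
    have h1 : (0:ℝ) < ‖z‖ ^ |γ - 1| := Real.rpow_pos_of_pos (lt_of_lt_of_le (by positivity) hz') _
    have h2 : (0:ℝ) < ‖w‖ ^ |γ - 1| := Real.rpow_pos_of_pos (lt_of_lt_of_le (by positivity) hw') _
    positivity
  rcases le_total ‖w‖ ‖z‖ with h | h
  · calc |‖z‖ ^ γ - ‖w‖ ^ γ| ≤ |γ| * (η ^ |γ - 1| + ‖z‖ ^ |γ - 1| + ‖w‖ ^ |γ - 1|) * |‖z‖ - ‖w‖| :=
        aux_bound hη hz' hw' h
      _ ≤ _ := by gcongr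
  · have h2 := aux_bound (γ := γ) hη hw' hz' h
    rw [abs_sub_comm] at h2
    calc |‖z‖ ^ γ - ‖w‖ ^ γ| ≤ |γ| * (η ^ |γ - 1| + ‖w‖ ^ |γ - 1| + ‖z‖ ^ |γ - 1|) * |‖w‖ - ‖z‖| :=
        h2
      _ ≤ _ := by
        rw [abs_sub_comm ‖w‖ ‖z‖]
        have : η ^ |γ - 1| + ‖w‖ ^ |γ - 1| + ‖z‖ ^ |γ - 1| = η ^ |γ - 1| + ‖z‖ ^ |γ - 1| + ‖w‖ ^ |γ - 1| := by ring
        rw [this]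
        gcongr
end

section
/- Let r₁, r₂ ∈ ℝ, J ∈ ℕ and R₀ > 0. Define C(γ, p) = ∏_{j=0}^{p−1} |γ − 2j| for p ≥ 1 and C(γ, 0) = 1, and set γ_k = 2 r₁ k + r₁ − r₂. Then the series ∑_{k=0}^{∞} ∑_{p=0}^{J} C(γ_k, p)·(1/(2k+1)!)·( R₀^{|γ_k − 2p|} + |γ_k − 2p|·R₀^{|γ_k − 2p − 1|} ) converges; i.e., the function k ↦ ∑_{p=0}^{J} C(γ_k, p)·(1/(2k+1)!)·( R₀^{|γ_k − 2p|} + |γ_k − 2p|·R₀^{|γ_k − 2p − 1|} ) is summable over k ∈ ℕ. -/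
lemma pow_le_factorial_mul_exp (x : ℝ) (hx : 0 ≤ x) (n : ℕ) :
    x ^ n ≤ (n.factorial : ℝ) * Real.exp x := by
  have h := Real.sum_le_exp_of_nonneg hx (n + 1)
  have h1 : x ^ n / (n.factorial : ℝ) ≤ ∑ i ∈ Finset.range (n + 1), x ^ i / (i.factorial : ℝ) :=
    Finset.single_le_sum (f := fun i => x ^ i / (i.factorial : ℝ))
      (fun i _ => by positivity) (Finset.self_mem_range_succ n)
  have hf : (0 : ℝ) < n.factorial := by positivity
  have := (h1.trans h)
  calc x ^ n = x ^ n / (n.factorial : ℝ) * n.factorial := by field_simp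
    _ ≤ Real.exp x * n.factorial := mul_le_mul_of_nonneg_right this hf.le
    _ = _ := mul_comm _ _

/-- The trigonometric-type nonlinearity `sin(|u|^{r₁})/|u|^{r₂}`
(coefficients `(−1)^k/(2k+1)!`, exponents `γ_k = 2r₁k + r₁ − r₂`)
satisfies the convergence hypothesis (1.6). Here `C(γ,p) = ∏_{j=0}^{p−1}|γ − 2j|`. -/
theorem stmt_10 (r₁ r₂ : ℝ) (J : ℕ) (R₀ : ℝ) (hR₀ : 0 < R₀) :
    Summable (fun k : ℕ => ∑ p ∈ Finset.range (J + 1),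
      (∏ j ∈ Finset.range p, |(2 * r₁ * (k : ℝ) + r₁ - r₂) - 2 * (j : ℝ)|) *
        (1 / (Nat.factorial (2 * k + 1) : ℝ)) *
        (R₀ ^ |(2 * r₁ * (k : ℝ) + r₁ - r₂) - 2 * (p : ℝ)| +
          |(2 * r₁ * (k : ℝ) + r₁ - r₂) - 2 * (p : ℝ)| *
            R₀ ^ |(2 * r₁ * (k : ℝ) + r₁ - r₂) - 2 * (p : ℝ) - 1|)) := by
  apply summable_sum
  intro p hp
  have hpJ : p ≤ J := Nat.lt_succ_iff.mp (Finset.mem_range.mp hp)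
  set M : ℝ := max R₀ R₀⁻¹ with hMdef
  have hM1 : 1 ≤ M := by
    rcases le_total 1 R₀ with h | h
    · exact h.trans (le_max_left _ _)
    · exact (one_le_inv_iff₀.mpr ⟨hR₀, h⟩).trans (le_max_right _ _)
  have hM0 : 0 < M := lt_of_lt_of_le one_pos hM1
  set L : ℝ := Real.log M with hLdef
  have hL : 0 ≤ L := Real.log_nonneg hM1
  set A : ℝ := |r₁ - r₂| + 2 * J + 3 with hAdef
  set B : ℝ := 2 * |r₁| with hBdef
  have hJ0 : (0 : ℝ) ≤ J := Nat.cast_nonneg J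
  have hA1 : 1 ≤ A := by
    have := abs_nonneg (r₁ - r₂); simp only [hAdef]; linarith
  have hB0 : 0 ≤ B := by positivity
  set E : ℝ := Real.exp (B * (1 + L)) with hEdef
  set K : ℝ := 2 * ((p + 1).factorial : ℝ) * Real.exp (A * (1 + L)) with hKdef
  have hg : Summable (fun k : ℕ => K * E ^ k / (k.factorial : ℝ)) := by
    simpa [mul_div_assoc] using (Real.summable_pow_div_factorial E).mul_left K
  apply Summable.of_nonneg_of_le _ _ hg
  · intro k
    have h1 : (0:ℝ) ≤ ∏ j ∈ Finset.range p, |(2 * r₁ * (k : ℝ) + r₁ - r₂) - 2 * (j : ℝ)| :=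
      Finset.prod_nonneg fun j _ => abs_nonneg _
    have h2 : (0:ℝ) < R₀ ^ |(2 * r₁ * (k : ℝ) + r₁ - r₂) - 2 * (p : ℝ)| := Real.rpow_pos_of_pos hR₀ _
    have h3 : (0:ℝ) < R₀ ^ |(2 * r₁ * (k : ℝ) + r₁ - r₂) - 2 * (p : ℝ) - 1| :=
      Real.rpow_pos_of_pos hR₀ _
    have h4 : (0:ℝ) ≤ |(2 * r₁ * (k : ℝ) + r₁ - r₂) - 2 * (p : ℝ)| := abs_nonneg _
    positivity
  · intro k
    set γ : ℝ := 2 * r₁ * (k : ℝ) + r₁ - r₂ with hγdef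
    set t : ℝ := A + B * k with htdef
    have hk0 : (0:ℝ) ≤ k := Nat.cast_nonneg k
    have ht1 : 1 ≤ t := by
      have : 0 ≤ B * k := by positivity
      simp only [htdef]; linarith
    have ht0 : 0 ≤ t := zero_le_one.trans ht1
    have hbase : |γ| ≤ |r₁ - r₂| + B * k := by
      have hγ : γ = 2 * r₁ * (k : ℝ) + (r₁ - r₂) := by rw [hγdef]; ring
      calc |γ| ≤ |2 * r₁ * (k : ℝ)| + |r₁ - r₂| := hγ ▸ abs_add_le _ _
        _ = B * k + |r₁ - r₂| := by
            rw [hBdef, abs_mul, abs_mul]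
            simp [abs_of_nonneg hk0]
        _ = _ := by ring
    have hbound : ∀ c : ℝ, |c| ≤ 2 * J + 3 → |γ - c| ≤ t := by
      intro c hc
      calc |γ - c| ≤ |γ| + |c| := abs_sub _ _
        _ ≤ t := by simp only [htdef, hAdef]; linarith
    have hbp : |γ - 2 * (p : ℝ)| ≤ t := by
      apply hbound
      rw [abs_of_nonneg (by positivity)]
      have : (p : ℝ) ≤ J := Nat.cast_le.mpr hpJ
      linarith
    have hbp1 : |γ - 2 * (p : ℝ) - 1| ≤ t := by
      have : γ - 2 * (p : ℝ) - 1 = γ - (2 * (p : ℝ) + 1) := by ring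
      rw [this]
      apply hbound
      rw [abs_of_nonneg (by positivity)]
      have : (p : ℝ) ≤ J := Nat.cast_le.mpr hpJ
      linarith
    have hprod : (∏ j ∈ Finset.range p, |γ - 2 * (j : ℝ)|) ≤ t ^ p := by
      calc (∏ j ∈ Finset.range p, |γ - 2 * (j : ℝ)|) ≤ ∏ _j ∈ Finset.range p, t := by
            apply Finset.prod_le_prod (fun j _ => abs_nonneg _)
            intro j hj
            apply hbound
            rw [abs_of_nonneg (by positivity)]
            have hjp : (j : ℝ) ≤ J := by
              have := (Finset.mem_range.mp hj).le.trans hpJ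
              exact_mod_cast this
            linarith
        _ = t ^ p := by rw [Finset.prod_const, Finset.card_range]
    have hX : R₀ ^ |γ - 2 * (p : ℝ)| ≤ M ^ t := by
      calc R₀ ^ |γ - 2 * (p : ℝ)| ≤ M ^ |γ - 2 * (p : ℝ)| :=
            Real.rpow_le_rpow hR₀.le (le_max_left _ _) (abs_nonneg _)
        _ ≤ M ^ t := Real.rpow_le_rpow_of_exponent_le hM1 hbp
    have hY : R₀ ^ |γ - 2 * (p : ℝ) - 1| ≤ M ^ t := by
      calc R₀ ^ |γ - 2 * (p : ℝ) - 1| ≤ M ^ |γ - 2 * (p : ℝ) - 1| :=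
            Real.rpow_le_rpow hR₀.le (le_max_left _ _) (abs_nonneg _)
        _ ≤ M ^ t := Real.rpow_le_rpow_of_exponent_le hM1 hbp1
    have hMt0 : 0 ≤ M ^ t := (Real.rpow_pos_of_pos hM0 t).le
    have hfact0 : (0:ℝ) < ((2 * k + 1).factorial : ℝ) := by positivity
    have hstep1 : (∏ j ∈ Finset.range p, |γ - 2 * (j : ℝ)|) *
          (1 / ((2 * k + 1).factorial : ℝ)) *
          (R₀ ^ |γ - 2 * (p : ℝ)| + |γ - 2 * (p : ℝ)| * R₀ ^ |γ - 2 * (p : ℝ) - 1|) ≤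
        t ^ p * (1 / ((2 * k + 1).factorial : ℝ)) * (M ^ t + t * M ^ t) := by
      gcongr
    have hstep2 : t ^ p * (1 / ((2 * k + 1).factorial : ℝ)) * (M ^ t + t * M ^ t) ≤
        2 * t ^ (p + 1) * M ^ t / ((2 * k + 1).factorial : ℝ) := by
      have h1 : M ^ t + t * M ^ t ≤ 2 * t * M ^ t := by nlinarith
      calc t ^ p * (1 / ((2 * k + 1).factorial : ℝ)) * (M ^ t + t * M ^ t)
          ≤ t ^ p * (1 / ((2 * k + 1).factorial : ℝ)) * (2 * t * M ^ t) := by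
            gcongr
        _ = 2 * t ^ (p + 1) * M ^ t / ((2 * k + 1).factorial : ℝ) := by
            rw [pow_succ]; ring
    have hstep3 : 2 * t ^ (p + 1) * M ^ t / ((2 * k + 1).factorial : ℝ) ≤
        K * E ^ k / (k.factorial : ℝ) := by
      have hpow : t ^ (p + 1) ≤ ((p + 1).factorial : ℝ) * Real.exp t :=
        pow_le_factorial_mul_exp t ht0 (p + 1)
      have hMt : M ^ t = Real.exp (t * L) := by
        rw [Real.rpow_def_of_pos hM0, mul_comm]
      have hexp : Real.exp t * Real.exp (t * L) = Real.exp (A * (1 + L)) * E ^ k := by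
        rw [hEdef, ← Real.exp_nat_mul, ← Real.exp_add, ← Real.exp_add]
        congr 1
        rw [htdef]; ring
      have hnum : 2 * t ^ (p + 1) * M ^ t ≤ K * E ^ k := by
        calc 2 * t ^ (p + 1) * M ^ t
            ≤ 2 * (((p + 1).factorial : ℝ) * Real.exp t) * M ^ t := by gcongr
          _ = K * E ^ k := by
              rw [hMt, hKdef]
              linear_combination (2 * (((p + 1).factorial : ℝ))) * hexp
      have hkfact : (k.factorial : ℝ) ≤ ((2 * k + 1).factorial : ℝ) := by
        exact_mod_cast Nat.factorial_le (by omega)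
      have hkf0 : (0:ℝ) < (k.factorial : ℝ) := by positivity
      calc 2 * t ^ (p + 1) * M ^ t / ((2 * k + 1).factorial : ℝ)
          ≤ K * E ^ k / ((2 * k + 1).factorial : ℝ) := by gcongr
        _ ≤ K * E ^ k / (k.factorial : ℝ) := by
            have hE0 : (0:ℝ) ≤ E := by rw [hEdef]; positivity
            have hK0 : (0:ℝ) ≤ K := by rw [hKdef]; positivity
            exact div_le_div_of_nonneg_left (by positivity) hkf0 hkfact
    exact (hstep1.trans hstep2).trans hstep3
end

section
/- Let γ ∈ ℝ, η > 0 and M > 0. If z, w ∈ ℂ satisfy η·|z| ≥ 1, η·|w| ≥ 1, |z| ≤ M and |w| ≤ M, then ‖ |z|^γ·z − |w|^γ·w ‖ ≤ ( |γ|·( η^{|γ−1|} + 2·M^{|γ−1|} )·M + η^{|γ|} + M^{|γ|} )·‖z − w‖. -/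
lemma aux_rpow_bound (η M r t : ℝ) (hη : 0 < η) (ht : t ∈ Set.Icc (1/η) M) :
    t ^ r ≤ η ^ |r| + M ^ |r| := by
  obtain ⟨h1, h2⟩ := ht
  have ht0 : 0 < t := lt_of_lt_of_le (by positivity) h1
  rcases le_or_gt 0 r with hr | hr
  · rw [abs_of_nonneg hr]
    have h3 : t ^ r ≤ M ^ r := Real.rpow_le_rpow ht0.le h2 hr
    have h4 : 0 ≤ η ^ r := Real.rpow_nonneg hη.le r
    linarith
  · rw [abs_of_neg hr]
    have h3 : t ^ r ≤ (1/η) ^ r := Real.rpow_le_rpow_of_nonpos (by positivity) h1 hr.le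
    have h4 : (1/η) ^ r = η ^ (-r) := by
      rw [one_div, Real.inv_rpow hη.le, ← Real.rpow_neg hη.le]
    have h5 : 0 ≤ M ^ (-r) := by
      have hM0 : (0:ℝ) < M := lt_of_lt_of_le (lt_of_lt_of_le (by positivity) h1) h2
      positivity
    rw [h4] at h3
    linarith

/-- Pointwise Lipschitz estimate for the power nonlinearity `z ↦ |z|^γ z` on the annulus
`1/η ≤ |z| ≤ M`. -/
theorem stmt_11 (γ η M : ℝ) (hη : 0 < η) (hM : 0 < M) (z w : ℂ)
    (hz : 1 ≤ η * ‖z‖) (hw : 1 ≤ η * ‖w‖) (hzM : ‖z‖ ≤ M) (hwM : ‖w‖ ≤ M) :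
    ‖(‖z‖ ^ γ) • z - (‖w‖ ^ γ) • w‖ ≤
      (|γ| * (η ^ |γ - 1| + 2 * M ^ |γ - 1|) * M + η ^ |γ| + M ^ |γ|) * ‖z - w‖ := by
  set a := ‖z‖ with ha
  set b := ‖w‖ with hb
  have hz1 : 1/η ≤ a := by rw [div_le_iff₀ hη]; linarith [mul_comm η a]
  have hw1 : 1/η ≤ b := by rw [div_le_iff₀ hη]; linarith [mul_comm η b]
  have haz : a ∈ Set.Icc (1/η) M := ⟨hz1, hzM⟩
  have hbw : b ∈ Set.Icc (1/η) M := ⟨hw1, hwM⟩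
  set C : ℝ := |γ| * (η ^ |γ - 1| + 2 * M ^ |γ - 1|) with hC
  -- Lipschitz bound for t ↦ t ^ γ on Icc (1/η) M
  have key : |a ^ γ - b ^ γ| ≤ C * |a - b| := by
    have hderiv : ∀ t ∈ Set.Icc (1/η) M,
        HasDerivWithinAt (fun x : ℝ => x ^ γ) (γ * t ^ (γ - 1)) (Set.Icc (1/η) M) t := by
      intro t ht
      have ht0 : t ≠ 0 := (lt_of_lt_of_le (by positivity) ht.1).ne'
      exact (Real.hasDerivAt_rpow_const (Or.inl ht0)).hasDerivWithinAt
    have hbound : ∀ t ∈ Set.Icc (1/η) M, ‖γ * t ^ (γ - 1)‖ ≤ C := by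
      intro t ht
      have ht0 : (0:ℝ) < t := lt_of_lt_of_le (by positivity) ht.1
      have h1 : t ^ (γ - 1) ≤ η ^ |γ - 1| + M ^ |γ - 1| :=
        aux_rpow_bound η M (γ - 1) t hη ht
      have h2 : 0 ≤ M ^ |γ - 1| := by positivity
      have h3 : (0:ℝ) ≤ t ^ (γ - 1) := (Real.rpow_pos_of_pos ht0 _).le
      rw [norm_mul, Real.norm_eq_abs, Real.norm_eq_abs, abs_of_nonneg h3]
      calc |γ| * t ^ (γ - 1) ≤ |γ| * (η ^ |γ - 1| + 2 * M ^ |γ - 1|) := by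
            apply mul_le_mul_of_nonneg_left _ (abs_nonneg γ); linarith
        _ = C := rfl
    have := (convex_Icc (1/η) M).norm_image_sub_le_of_norm_hasDerivWithin_le
      hderiv hbound hbw haz
    simpa [Real.norm_eq_abs] using this
  have hab : |a - b| ≤ ‖z - w‖ := abs_norm_sub_norm_le z w
  have hbγ : b ^ γ ≤ η ^ |γ| + M ^ |γ| := aux_rpow_bound η M γ b hη hbw
  have hsplit : (a ^ γ) • z - (b ^ γ) • w = (a ^ γ - b ^ γ) • z + (b ^ γ) • (z - w) := by
    rw [sub_smul, smul_sub]; abel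
  have hC0 : 0 ≤ C := by
    have : (0:ℝ) ≤ η ^ |γ - 1| := by positivity
    have : (0:ℝ) ≤ M ^ |γ - 1| := by positivity
    positivity
  have hbγ0 : 0 ≤ b ^ γ := by
    have hb0 : (0:ℝ) < b := lt_of_lt_of_le (by positivity) hw1
    positivity
  calc ‖(a ^ γ) • z - (b ^ γ) • w‖
      ≤ ‖(a ^ γ - b ^ γ) • z‖ + ‖(b ^ γ) • (z - w)‖ := by rw [hsplit]; exact norm_add_le _ _
    _ = |a ^ γ - b ^ γ| * a + b ^ γ * ‖z - w‖ := by
        rw [norm_smul, norm_smul, Real.norm_eq_abs, Real.norm_eq_abs, abs_of_nonneg hbγ0]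
    _ ≤ (C * ‖z - w‖) * M + (η ^ |γ| + M ^ |γ|) * ‖z - w‖ := by
        have hL : |a ^ γ - b ^ γ| ≤ C * ‖z - w‖ := key.trans (by gcongr)
        have h1 : |a ^ γ - b ^ γ| * a ≤ (C * ‖z - w‖) * M :=
          mul_le_mul hL hzM (norm_nonneg z) (by positivity)
        have h2 : b ^ γ * ‖z - w‖ ≤ (η ^ |γ| + M ^ |γ|) * ‖z - w‖ := by
          gcongr
        linarith
    _ = (C * M + η ^ |γ| + M ^ |γ|) * ‖z - w‖ := by ring
end

section
/- Let a : ℕ → ℂ and γ : ℕ → ℝ, and assume that for every R₀ > 0 the function k ↦ ‖a_k‖·( R₀^{|γ_k|} + |γ_k|·R₀^{|γ_k − 1|} ) is summable over k ∈ ℕ. Let η > 0 and M > 0, and let z, w ∈ ℂ satisfy η·|z| ≥ 1, η·|w| ≥ 1, |z| ≤ M and |w| ≤ M. Then ‖ ∑'_{k} a_k·|z|^{γ_k}·z − ∑'_{k} a_k·|w|^{γ_k}·w ‖ ≤ ( ∑'_{k} ‖a_k‖·( |γ_k|·( η^{|γ_k−1|} + 2·M^{|γ_k−1|} )·M + η^{|γ_k|}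 + M^{|γ_k|} ) )·‖z − w‖. -/
lemma aux_pow_bound (η M t e : ℝ) (hη : 0 < η) (hM : 0 < M) (ht1 : η⁻¹ ≤ t) (ht2 : t ≤ M) :
    t ^ e ≤ η ^ |e| + M ^ |e| := by
  have ht0 : 0 < t := lt_of_lt_of_le (inv_pos.2 hη) ht1
  rcases le_or_gt 0 e with he | he
  · rw [abs_of_nonneg he]
    have h1 : t ^ e ≤ M ^ e := Real.rpow_le_rpow ht0.le ht2 he
    have h2 : 0 ≤ η ^ e := Real.rpow_nonneg hη.le e
    linarith
  · rw [abs_of_neg he]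
    have key : t ^ e = (t⁻¹) ^ (-e) := by
      rw [Real.inv_rpow ht0.le, ← Real.rpow_neg ht0.le, neg_neg]
    have htinv : t⁻¹ ≤ η := by
      rw [inv_le_comm₀ ht0 hη]; exact ht1
    have h1 : (t⁻¹) ^ (-e) ≤ η ^ (-e) :=
      Real.rpow_le_rpow (inv_nonneg.2 ht0.le) htinv (by linarith)
    have h2 : 0 ≤ M ^ (-e) := Real.rpow_nonneg hM.le (-e)
    linarith [key ▸ h1]

lemma aux_mvt (η M e : ℝ) (hη : 0 < η) (hM : 0 < M) (u v : ℝ)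
    (hu : u ∈ Set.Icc η⁻¹ M) (hv : v ∈ Set.Icc η⁻¹ M) :
    |u ^ e - v ^ e| ≤ |e| * (η ^ |e - 1| + M ^ |e - 1|) * |u - v| := by
  set s : Set ℝ := Set.Icc η⁻¹ M
  have hderiv : ∀ x ∈ s, HasDerivWithinAt (fun t : ℝ => t ^ e) (e * x ^ (e - 1)) s x := by
    intro x hx
    have hx0 : x ≠ 0 := (lt_of_lt_of_le (inv_pos.2 hη) hx.1).ne'
    exact (Real.hasDerivAt_rpow_const (Or.inl hx0)).hasDerivWithinAt
  have hbound : ∀ x ∈ s, ‖e * x ^ (e - 1)‖ ≤ |e| * (η ^ |e - 1| + M ^ |e - 1|) := by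
    intro x hx
    have hx0 : 0 < x := lt_of_lt_of_le (inv_pos.2 hη) hx.1
    rw [norm_mul, Real.norm_eq_abs, Real.norm_eq_abs, abs_of_nonneg (Real.rpow_nonneg hx0.le _)]
    exact mul_le_mul_of_nonneg_left (aux_pow_bound η M x (e - 1) hη hM hx.1 hx.2) (abs_nonneg e)
  have := (convex_Icc η⁻¹ M).norm_image_sub_le_of_norm_hasDerivWithin_le hderiv hbound hv hu
  simpa [Real.norm_eq_abs] using this

/-- Pointwise Lipschitz estimate for the series nonlinearity
`z ↦ ∑_k a_k |z|^{γ_k} z` on the annulus `1/η ≤ |z| ≤ M`. -/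
theorem stmt_14 (a : ℕ → ℂ) (γ : ℕ → ℝ)
    (h : ∀ R₀ : ℝ, 0 < R₀ →
      Summable (fun k : ℕ => ‖a k‖ * (R₀ ^ |γ k| + |γ k| * R₀ ^ |γ k - 1|)))
    (η M : ℝ) (hη : 0 < η) (hM : 0 < M) (z w : ℂ)
    (hz : 1 ≤ η * ‖z‖) (hw : 1 ≤ η * ‖w‖) (hzM : ‖z‖ ≤ M) (hwM : ‖w‖ ≤ M) :
    ‖(∑' k : ℕ, a k * Complex.ofReal (‖z‖ ^ γ k) * z) -
        (∑' k : ℕ, a k * Complex.ofReal (‖w‖ ^ γ k) * w)‖ ≤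
      (∑' k : ℕ, ‖a k‖ *
        (|γ k| * (η ^ |γ k - 1| + 2 * M ^ |γ k - 1|) * M + η ^ |γ k| + M ^ |γ k|)) *
        ‖z - w‖ := by
  have hz1 : η⁻¹ ≤ ‖z‖ := by rw [inv_le_iff_one_le_mul₀ hη]; linarith [hz]
  have hw1 : η⁻¹ ≤ ‖w‖ := by rw [inv_le_iff_one_le_mul₀ hη]; linarith [hw]
  set b : ℕ → ℝ := fun k => ‖a k‖ *
      (|γ k| * (η ^ |γ k - 1| + 2 * M ^ |γ k - 1|) * M + η ^ |γ k| + M ^ |γ k|) with hb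
  -- summability pieces
  have hsη := h η hη
  have hsM := h M hM
  have nn : ∀ (R : ℝ) (k : ℕ), 0 < R → 0 ≤ ‖a k‖ * R ^ |γ k| ∧
      0 ≤ ‖a k‖ * (|γ k| * R ^ |γ k - 1|) := by
    intro R k hR
    constructor <;> positivity
  have s_aη : Summable (fun k => ‖a k‖ * η ^ |γ k|) := by
    refine Summable.of_nonneg_of_le (fun k => (nn η k hη).1) (fun k => ?_) hsη
    have : 0 ≤ ‖a k‖ * (|γ k| * η ^ |γ k - 1|) := (nn η k hη).2
    nlinarith [mul_nonneg (norm_nonneg (a k)) (Real.rpow_nonneg hη.le |γ k|)]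
  have s_aM : Summable (fun k => ‖a k‖ * M ^ |γ k|) := by
    refine Summable.of_nonneg_of_le (fun k => (nn M k hM).1) (fun k => ?_) hsM
    have : 0 ≤ ‖a k‖ * (|γ k| * M ^ |γ k - 1|) := (nn M k hM).2
    nlinarith
  have s_bη : Summable (fun k => ‖a k‖ * (|γ k| * η ^ |γ k - 1|)) := by
    refine Summable.of_nonneg_of_le (fun k => (nn η k hη).2) (fun k => ?_) hsη
    have : 0 ≤ ‖a k‖ * η ^ |γ k| := (nn η k hη).1
    nlinarith
  have s_bM : Summable (fun k => ‖a k‖ * (|γ k| * M ^ |γ k - 1|)) := by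
    refine Summable.of_nonneg_of_le (fun k => (nn M k hM).2) (fun k => ?_) hsM
    have : 0 ≤ ‖a k‖ * M ^ |γ k| := (nn M k hM).1
    nlinarith
  have s_b : Summable b := by
    have := (((s_bη.mul_left M).add ((s_bM.mul_left (2 * M)))).add (s_aη.add s_aM))
    refine this.congr fun k => ?_
    simp only [hb]; ring
  have b_nonneg : ∀ k, 0 ≤ b k := by
    intro k
    have h1 : 0 ≤ η ^ |γ k - 1| := Real.rpow_nonneg hη.le _
    have h2 : 0 ≤ M ^ |γ k - 1| := Real.rpow_nonneg hM.le _
    have h3 : 0 ≤ η ^ |γ k| := Real.rpow_nonneg hη.le _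
    have h4 : 0 ≤ M ^ |γ k| := Real.rpow_nonneg hM.le _
    have := abs_nonneg (γ k)
    positivity
  -- pointwise bound
  have ptwise : ∀ k : ℕ,
      ‖a k * Complex.ofReal (‖z‖ ^ γ k) * z - a k * Complex.ofReal (‖w‖ ^ γ k) * w‖
        ≤ b k * ‖z - w‖ := by
    intro k
    set e := γ k
    have key : a k * Complex.ofReal (‖z‖ ^ e) * z - a k * Complex.ofReal (‖w‖ ^ e) * w
        = a k * (Complex.ofReal (‖z‖ ^ e) * (z - w)
            + (Complex.ofReal (‖z‖ ^ e) - Complex.ofReal (‖w‖ ^ e)) * w) := by ring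
    rw [key, norm_mul]
    have h1 : ‖Complex.ofReal (‖z‖ ^ e) * (z - w)
          + (Complex.ofReal (‖z‖ ^ e) - Complex.ofReal (‖w‖ ^ e)) * w‖
        ≤ (η ^ |e| + M ^ |e|) * ‖z - w‖
          + |e| * (η ^ |e - 1| + M ^ |e - 1|) * ‖z - w‖ * M := by
      refine le_trans (norm_add_le _ _) (add_le_add ?_ ?_)
      · rw [norm_mul, Complex.norm_real, Real.norm_eq_abs,
          abs_of_nonneg (Real.rpow_nonneg (norm_nonneg z) e)]
        exact mul_le_mul_of_nonneg_right
          (aux_pow_bound η M ‖z‖ e hη hM hz1 hzM) (norm_nonneg _)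
      · rw [norm_mul, ← Complex.ofReal_sub, Complex.norm_real, Real.norm_eq_abs]
        have hdiff : |‖z‖ ^ e - ‖w‖ ^ e| ≤ |e| * (η ^ |e - 1| + M ^ |e - 1|) * ‖z - w‖ := by
          refine le_trans (aux_mvt η M e hη hM ‖z‖ ‖w‖ ⟨hz1, hzM⟩ ⟨hw1, hwM⟩) ?_
          refine mul_le_mul_of_nonneg_left (abs_norm_sub_norm_le z w) ?_
          have h1 : 0 ≤ η ^ |e - 1| := Real.rpow_nonneg hη.le _
          have h2 : 0 ≤ M ^ |e - 1| := Real.rpow_nonneg hM.le _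
          positivity
        calc |‖z‖ ^ e - ‖w‖ ^ e| * ‖w‖
            ≤ (|e| * (η ^ |e - 1| + M ^ |e - 1|) * ‖z - w‖) * M :=
              mul_le_mul hdiff hwM (norm_nonneg w) (by positivity)
          _ = _ := by ring
    calc ‖a k‖ * ‖_ + _‖ ≤ ‖a k‖ * ((η ^ |e| + M ^ |e|) * ‖z - w‖
          + |e| * (η ^ |e - 1| + M ^ |e - 1|) * ‖z - w‖ * M) :=
          mul_le_mul_of_nonneg_left h1 (norm_nonneg _)
      _ ≤ b k * ‖z - w‖ := by
          simp only [hb]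
          have h2 : 0 ≤ M ^ |e - 1| := Real.rpow_nonneg hM.le _
          have h3 : 0 ≤ ‖z - w‖ := norm_nonneg _
          have h4 : 0 ≤ ‖a k‖ := norm_nonneg _
          nlinarith [mul_nonneg (mul_nonneg h4 (abs_nonneg e)) (mul_nonneg (mul_nonneg h2 hM.le) h3)]
  -- summability of the two series
  have sumM : Summable (fun k => ‖a k‖ * (η ^ |γ k| + M ^ |γ k|) * M) := by
    refine ((s_aη.add s_aM).mul_right M).congr fun k => ?_; ring
  have sF : ∀ u : ℂ, η⁻¹ ≤ ‖u‖ → ‖u‖ ≤ M →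
      Summable (fun k => a k * Complex.ofReal (‖u‖ ^ γ k) * u) := by
    intro u hu1 hu2
    refine Summable.of_norm (Summable.of_nonneg_of_le (fun k => norm_nonneg _) (fun k => ?_) sumM)
    rw [norm_mul, norm_mul, Complex.norm_real, Real.norm_eq_abs,
      abs_of_nonneg (Real.rpow_nonneg (norm_nonneg u) _)]
    have hpb := aux_pow_bound η M ‖u‖ (γ k) hη hM hu1 hu2
    have h4 : 0 ≤ ‖a k‖ := norm_nonneg _
    have h5 : 0 ≤ ‖u‖ := norm_nonneg _
    have h6 : 0 ≤ ‖a k‖ * (η ^ |γ k| + M ^ |γ k|) := by positivity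
    exact mul_le_mul (mul_le_mul_of_nonneg_left hpb h4) hu2 h5 h6
  have sz := sF z hz1 hzM
  have sw := sF w hw1 hwM
  rw [← Summable.tsum_sub sz sw]
  have snorm : Summable (fun k =>
      ‖a k * Complex.ofReal (‖z‖ ^ γ k) * z - a k * Complex.ofReal (‖w‖ ^ γ k) * w‖) :=
    Summable.of_nonneg_of_le (fun k => norm_nonneg _) ptwise (s_b.mul_right _)
  calc ‖∑' k, (a k * Complex.ofReal (‖z‖ ^ γ k) * z - a k * Complex.ofReal (‖w‖ ^ γ k) * w)‖
      ≤ ∑' k, ‖a k * Complex.ofReal (‖z‖ ^ γ k) * z - a k * Complex.ofReal (‖w‖ ^ γ k) * w‖ :=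
        norm_tsum_le_tsum_norm snorm
    _ ≤ ∑' k, b k * ‖z - w‖ := Summable.tsum_le_tsum ptwise snorm (s_b.mul_right _)
    _ = (∑' k, b k) * ‖z - w‖ := tsum_mul_right
end
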